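/- arXiv:2207.03619 — 2 statements merged into one kernel-verified Lean document; each statement's English description precedes it below -/
import Mathlib

section
/- Suppose H is a nontrivial BSHM(n,ℓ,a,b) with respect to H₁ (so 1 < ℓ < n−1), with the values a and b both attained, and suppose a ≢ b (mod 4). Then b ≠ −a; exactly one of the congruences ℓ ≡ a (mod 4) and ℓ ≡ b (mod 4) holds; and if ℓ ≡ a (mod 4), then k_a(i) = n/2 − 1 for every column index i. -/
open Matrix Finset

/-- A Hadamard matrix of order `n`: entries in `{1,-1}` and `Hᵀ * H = n • 1`. -/
def IsHadamard {n : ℕ} (H : Matrix (Fin n) (Fin n) ℤ) : Prop :=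
  (∀ i j, H i j = 1 ∨ H i j = -1) ∧ Hᵀ * H = (n : ℤ) • 1

/-- Dot product of columns `j` and `k` of the submatrix of `H` formed by the rows in `R`. -/
def colDot {n : ℕ} (H : Matrix (Fin n) (Fin n) ℤ) (R : Finset (Fin n)) (j k : Fin n) : ℤ :=
  ∑ i ∈ R, H i j * H i k

/-- `H` is a balanced splittable Hadamard matrix with respect to the submatrix formed by the
rows in `R`, with values `a, b`. -/
def IsBSHM {n : ℕ} (H : Matrix (Fin n) (Fin n) ℤ) (R : Finset (Fin n)) (a b : ℤ) : Prop :=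
  _root_.IsHadamard H ∧ ∀ j k : Fin n, j ≠ k → colDot H R j k = a ∨ colDot H R j k = b

/-- `kA H R a i` is the number of columns `j ≠ i` whose dot product with column `i`
(in the submatrix with rows `R`) equals `a`. -/
def kA {n : ℕ} (H : Matrix (Fin n) (Fin n) ℤ) (R : Finset (Fin n)) (a : ℤ) (i : Fin n) : ℕ :=
  (univ.filter fun j => j ≠ i ∧ colDot H R i j = a).card

/-!
Let `G = Hᵀ P H` be the Gram matrix of the columns of `H₁`, where `P` projects onto the rows
in `R`; row orthogonality `H Hᵀ = n • 1` gives `G² = n G`. Entrywise, `G` has diagonal `ℓ`,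
off-diagonal entries `≡ ℓ (mod 2)`, and `G i j + G i k + G j k ≡ 3ℓ (mod 4)`, because
`xy + xz + yz ≡ 3 (mod 4)` for `x, y, z = ±1`.

Parity gives `a ≡ b ≡ ℓ (mod 2)`, hence exactly one of `a, b` is `ℓ` mod 4. If `b = -a`, then `a`
is odd and the mod 4 relation forces `G i j * G j k = d * G i k` for distinct columns, with
`d = ±a ≡ ℓ (mod 4)`; the `(i, k)` entry of `G² = n G` then reads `n = 2ℓ + (n - 2) d`, impossible
for odd `d` and `2 ≤ ℓ ≤ n - 2`. If `ℓ ≡ a (mod 4)`, the diagonal of `G² = n G` gives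
`k_a a² + k_b b² = nℓ - ℓ²`, which with `k_a + k_b = n - 1` and `a² ≠ b²` makes `k_a` constant;
and for columns `j ≠ k` with `G j k = b`, the mod 4 relation shows that every other column meets
exactly one of them in `b`, so `k_b(j) + k_b(k) = n`.
-/
theorem IsHadamard.mul_transpose {n : ℕ} {H : Matrix (Fin n) (Fin n) ℤ}
    (hH : _root_.IsHadamard H) : H * Hᵀ = (n : ℤ) • 1 := by
  rcases Nat.eq_zero_or_pos n with rfl | hn
  · exact Subsingleton.elim _ _
  have hHt : Hᵀ.IsHadamard := by
    refine .of_mul_conjTranspose (fun i j => ?_) ?_ (IsRegular.of_ne_zero ?_)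
    · exact Unitary.mem_iff_eq_one_or_eq_neg_one.mpr (hH.1 j i)
    · simpa [conjTranspose_eq_transpose_of_trivial] using hH.2
    · simpa using hn.ne'
  simpa [conjTranspose_eq_transpose_of_trivial] using hHt.conjTranspose_mul

section colDot

variable {n : ℕ} {H : Matrix (Fin n) (Fin n) ℤ}

theorem colDot_comm (R : Finset (Fin n)) (j k : Fin n) : colDot H R j k = colDot H R k j :=
  sum_congr rfl fun _ _ => mul_comm _ _

theorem of_colDot_eq_transpose_mul (R : Finset (Fin n)) :
    Matrix.of (colDot H R) = Hᵀ * (diagonal (fun i => if i ∈ R then 1 else 0) * H) := by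
  ext j k
  rw [of_apply, mul_apply]
  simp [colDot, diagonal_mul, Finset.sum_ite_mem]

theorem sum_colDot_mul_colDot (hH : H * Hᵀ = (n : ℤ) • 1) (R : Finset (Fin n)) (i k : Fin n) :
    ∑ j, colDot H R i j * colDot H R j k = n * colDot H R i k := by
  set P : Matrix (Fin n) (Fin n) ℤ := diagonal fun i => if i ∈ R then 1 else 0
  have hP : P * P = P := by
    simp only [P, diagonal_mul_diagonal]
    congr! 2 with i
    split_ifs <;> simp
  have hG : Matrix.of (colDot H R) * Matrix.of (colDot H R) =
      (n : ℤ) • Matrix.of (colDot H R) :=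
    calc Matrix.of (colDot H R) * Matrix.of (colDot H R) = Hᵀ * (P * (H * Hᵀ) * P * H) := by
          simp only [of_colDot_eq_transpose_mul, P, Matrix.mul_assoc]
      _ = Hᵀ * ((n : ℤ) • (P * P) * H) := by
          rw [hH, Matrix.mul_smul, Matrix.mul_one, Matrix.smul_mul]
      _ = (n : ℤ) • Matrix.of (colDot H R) := by
          rw [hP, Matrix.smul_mul, Matrix.mul_smul, of_colDot_eq_transpose_mul]
  simpa [mul_apply] using congrFun (congrFun hG i) k

theorem colDot_self (hH : ∀ i j, H i j = 1 ∨ H i j = -1) (R : Finset (Fin n)) (j : Fin n) :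
    colDot H R j j = R.card := by
  rw [colDot, sum_congr rfl fun i _ => show H i j * H i j = 1 by
    rcases hH i j with h | h <;> rw [h] <;> norm_num]
  simp

theorem colDot_modEq_two (hH : ∀ i j, H i j = 1 ∨ H i j = -1) (R : Finset (Fin n))
    (j k : Fin n) : colDot H R j k ≡ R.card [ZMOD 2] := by
  calc colDot H R j k ≡ ∑ _ ∈ R, 1 [ZMOD 2] := Int.ModEq.sum fun i _ => by
        rcases hH i j with h | h <;> rcases hH i k with h' | h' <;> rw [h, h'] <;> rfl
    _ = R.card := by simp

theorem colDot_add_colDot_add_colDot_modEq_four (hH : ∀ i j, H i j = 1 ∨ H i j = -1)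
    (R : Finset (Fin n)) (i j k : Fin n) :
    colDot H R i j + colDot H R i k + colDot H R j k ≡ 3 * R.card [ZMOD 4] := by
  calc colDot H R i j + colDot H R i k + colDot H R j k ≡ ∑ _ ∈ R, 3 [ZMOD 4] := by
        simp only [colDot, ← sum_add_distrib]
        refine Int.ModEq.sum fun r _ => ?_
        rcases hH r i with h | h <;> rcases hH r j with h' | h' <;> rcases hH r k with h'' | h'' <;>
          rw [h, h', h''] <;> rfl
    _ = 3 * R.card := by simp [mul_comm]

end colDot

namespace Int

theorem xor_modEq_four_of_modEq_two {l a b : ℤ} (ha : a ≡ l [ZMOD 2]) (hb : b ≡ l [ZMOD 2])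
    (hab : ¬ a ≡ b [ZMOD 4]) : Xor (l ≡ a [ZMOD 4]) (l ≡ b [ZMOD 4]) := by
  simp only [Int.ModEq, xor_iff_or_and_not_and] at *
  omega

theorem mul_eq_mul_of_add_add_modEq {a d x y z : ℤ} (ha : Odd a) (hd : d = a ∨ d = -a)
    (hx : x = a ∨ x = -a) (hy : y = a ∨ y = -a) (hz : z = a ∨ z = -a)
    (h : x + y + z ≡ 3 * d [ZMOD 4]) : x * y = d * z := by
  rw [Int.odd_iff] at ha
  unfold Int.ModEq at h
  rcases hd with rfl | rfl <;> rcases hx with rfl | rfl <;> rcases hy with rfl | rfl <;>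
    rcases hz with rfl | rfl <;> first | ring1 | omega

theorem eq_iff_ne_of_add_add_modEq {a b x y : ℤ} (hab : ¬ a ≡ b [ZMOD 4])
    (hx : x = a ∨ x = b) (hy : y = a ∨ y = b) (h : b + x + y ≡ 3 * a [ZMOD 4]) :
    x = b ↔ y ≠ b := by
  unfold Int.ModEq at hab h
  rcases hx with rfl | rfl <;> rcases hy with rfl | rfl <;> omega

end Int

section BSHM

variable {n : ℕ} {H : Matrix (Fin n) (Fin n) ℤ} {R : Finset (Fin n)} {a b : ℤ}

theorem natCast_eq_of_colDot_eq_or_eq_neg (hH : _root_.IsHadamard H) (ha : Odd a) {d : ℤ}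
    (hd : d = a ∨ d = -a) (hdot : ∀ j k, j ≠ k → colDot H R j k = a ∨ colDot H R j k = -a)
    (hℓ : (R.card : ℤ) ≡ d [ZMOD 4]) {i k : Fin n} (hik : i ≠ k) :
    (n : ℤ) = 2 * R.card + (n - 2) * d := by
  have hprod : ∀ j ∈ (univ.erase i).erase k,
      colDot H R i j * colDot H R j k = d * colDot H R i k := by
    intro j hj
    obtain ⟨hjk, hji, -⟩ := by simpa only [mem_erase] using hj
    refine Int.mul_eq_mul_of_add_add_modEq ha hd (hdot i j (Ne.symm hji)) (hdot j k hjk)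
      (hdot i k hik) ?_
    calc colDot H R i j + colDot H R j k + colDot H R i k
        = colDot H R i j + colDot H R i k + colDot H R j k := by ring
      _ ≡ 3 * R.card [ZMOD 4] := colDot_add_colDot_add_colDot_modEq_four hH.1 R i j k
      _ ≡ 3 * d [ZMOD 4] := hℓ.mul_left 3
  have hn : 2 ≤ n := by
    have := Fin.val_ne_of_ne hik
    omega
  have hsum := sum_colDot_mul_colDot hH.mul_transpose R i k
  rw [← add_sum_erase _ _ (mem_univ i), ← add_sum_erase _ _ (mem_erase.2 ⟨hik.symm, mem_univ k⟩),
    sum_congr rfl hprod, sum_const, card_erase_of_mem (mem_erase.2 ⟨hik.symm, mem_univ k⟩),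
    card_erase_of_mem (mem_univ i), card_univ, Fintype.card_fin, colDot_self hH.1,
    colDot_self hH.1, nsmul_eq_mul, Nat.cast_sub (by omega), Nat.cast_sub (by omega)] at hsum
  have hik0 : colDot H R i k ≠ 0 := by
    have ha0 : a ≠ 0 := by
      rintro rfl
      simp at ha
    rcases hdot i k hik with h | h <;> simpa [h] using ha0
  apply mul_right_cancel₀ hik0
  linear_combination -hsum

theorem not_forall_colDot_eq_or_eq_neg (hH : _root_.IsHadamard H) (ha : Odd a)
    (hℓ : (R.card : ℤ) ≡ a [ZMOD 4] ∨ (R.card : ℤ) ≡ -a [ZMOD 4])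
    (h1 : 1 < R.card) (h2 : R.card < n - 1) :
    ¬ ∀ j k, j ≠ k → colDot H R j k = a ∨ colDot H R j k = -a := by
  intro hdot
  obtain ⟨d, hd, hℓd⟩ : ∃ d, (d = a ∨ d = -a) ∧ (R.card : ℤ) ≡ d [ZMOD 4] :=
    hℓ.elim (fun h => ⟨a, .inl rfl, h⟩) (fun h => ⟨-a, .inr rfl, h⟩)
  have hn := natCast_eq_of_colDot_eq_or_eq_neg hH ha hd hdot hℓd
    (i := ⟨0, by omega⟩) (k := ⟨1, by omega⟩) (by simp)
  obtain ⟨m, rfl⟩ : Odd d := by rcases hd with rfl | rfl <;> simp [ha]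
  have hℓ2 : (2 : ℤ) ≤ R.card := by exact_mod_cast h1
  have hℓn : (R.card : ℤ) + 2 ≤ n := by omega
  rcases le_or_gt 0 m with hm | hm
  · nlinarith [mul_nonneg (by linarith : (0 : ℤ) ≤ n - 2) hm]
  · nlinarith [mul_nonneg (by linarith : (0 : ℤ) ≤ n - 2) (by linarith : (0 : ℤ) ≤ -1 - m)]

theorem sum_erase_colDot_eq (hab : a ≠ b)
    (hdot : ∀ j k, j ≠ k → colDot H R j k = a ∨ colDot H R j k = b) (φ : ℤ → ℤ) (i : Fin n) :
    ∑ j ∈ univ.erase i, φ (colDot H R i j) = kA H R a i * φ a + kA H R b i * φ b := by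
  have hA : (univ.erase i).filter (fun j => colDot H R i j = a) =
      univ.filter fun j => j ≠ i ∧ colDot H R i j = a := by
    ext j
    simp
  have hB : (univ.erase i).filter (fun j => ¬ colDot H R i j = a) =
      univ.filter fun j => j ≠ i ∧ colDot H R i j = b := by
    ext j
    simp only [mem_filter, mem_erase, mem_univ, and_true, true_and]
    exact and_congr_right fun hji =>
      ⟨(hdot i j (Ne.symm hji)).resolve_left, fun hb ha => hab (ha.symm.trans hb)⟩
  rw [← sum_filter_add_sum_filter_not _ (fun j => colDot H R i j = a), hA, hB,
    sum_eq_card_nsmul fun j hj => congrArg φ (mem_filter.1 hj).2.2,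
    sum_eq_card_nsmul fun j hj => congrArg φ (mem_filter.1 hj).2.2, nsmul_eq_mul, nsmul_eq_mul]
  rfl

theorem kA_add_kA (hab : a ≠ b)
    (hdot : ∀ j k, j ≠ k → colDot H R j k = a ∨ colDot H R j k = b) (i : Fin n) :
    (kA H R a i : ℤ) + kA H R b i = n - 1 := by
  have h := sum_erase_colDot_eq hab hdot (fun _ => 1) i
  rw [sum_const, card_erase_of_mem (mem_univ i), card_univ, Fintype.card_fin, nsmul_eq_mul,
    Nat.cast_sub i.pos] at h
  push_cast at h
  linear_combination -h

theorem kA_mul_sq_add_kA_mul_sq (hH : _root_.IsHadamard H) (hab : a ≠ b)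
    (hdot : ∀ j k, j ≠ k → colDot H R j k = a ∨ colDot H R j k = b) (i : Fin n) :
    (kA H R a i : ℤ) * a ^ 2 + kA H R b i * b ^ 2 = n * R.card - R.card ^ 2 := by
  have hsum := sum_colDot_mul_colDot hH.mul_transpose R i i
  rw [← add_sum_erase _ _ (mem_univ i), colDot_self hH.1] at hsum
  calc (kA H R a i : ℤ) * a ^ 2 + kA H R b i * b ^ 2
      = ∑ j ∈ univ.erase i, colDot H R i j * colDot H R j i := by
        rw [← sum_erase_colDot_eq hab hdot (· ^ 2)]
        exact sum_congr rfl fun j _ => by rw [sq, colDot_comm R j i]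
    _ = n * R.card - R.card ^ 2 := by linear_combination hsum

theorem kA_eq_kA (hH : _root_.IsHadamard H) (hab : a ≠ b) (hba : b ≠ -a)
    (hdot : ∀ j k, j ≠ k → colDot H R j k = a ∨ colDot H R j k = b) (i i' : Fin n) :
    kA H R a i = kA H R a i' := by
  have key : ∀ i, (kA H R a i : ℤ) * (a ^ 2 - b ^ 2) = n * R.card - R.card ^ 2 - (n - 1) * b ^ 2 :=
    fun i => by
      linear_combination kA_mul_sq_add_kA_mul_sq hH hab hdot i - b ^ 2 * kA_add_kA hab hdot i
  have hab2 : a ^ 2 - b ^ 2 ≠ 0 := by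
    rw [sq_sub_sq]
    exact mul_ne_zero (fun h => hba (by linear_combination h)) (sub_ne_zero.2 hab)
  exact_mod_cast mul_right_cancel₀ hab2 ((key i).trans (key i').symm)

theorem kA_add_kA_of_colDot_eq (hH : ∀ i j, H i j = 1 ∨ H i j = -1) (hab : ¬ a ≡ b [ZMOD 4])
    (hdot : ∀ j k, j ≠ k → colDot H R j k = a ∨ colDot H R j k = b)
    (hℓ : (R.card : ℤ) ≡ a [ZMOD 4]) {j k : Fin n} (hjk : j ≠ k) (hb : colDot H R j k = b) :
    kA H R b j + kA H R b k = n := by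
  have hcompl : univ.filter (fun m => m ≠ k ∧ colDot H R k m = b) =
      (univ.filter fun m => m ≠ j ∧ colDot H R j m = b)ᶜ := by
    ext m
    simp only [mem_compl, mem_filter, mem_univ, true_and]
    by_cases hmj : m = j
    · simp [hmj, hjk, colDot_comm R k j, hb]
    by_cases hmk : m = k
    · simp [hmk, hjk.symm, hb]
    simp only [hmj, hmk, ne_eq, not_false_eq_true, true_and]
    refine Int.eq_iff_ne_of_add_add_modEq hab (hdot k m (Ne.symm hmk)) (hdot j m (Ne.symm hmj)) ?_
    calc b + colDot H R k m + colDot H R j m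
        = colDot H R j k + colDot H R j m + colDot H R k m := by rw [hb]; ring
      _ ≡ 3 * R.card [ZMOD 4] := colDot_add_colDot_add_colDot_modEq_four hH R j k m
      _ ≡ 3 * a [ZMOD 4] := hℓ.mul_left 3
  have hle := card_le_univ (univ.filter fun m => m ≠ j ∧ colDot H R j m = b)
  rw [Fintype.card_fin] at hle
  rw [kA, kA, hcompl, card_compl, Fintype.card_fin]
  omega

end BSHM

theorem stmt9 {n ℓ : ℕ} (a b : ℤ) (H : Matrix (Fin n) (Fin n) ℤ)
    (R : Finset (Fin n)) (hRcard : R.card = ℓ) (h1 : 1 < ℓ) (h2 : ℓ < n - 1)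
    (hbshm : IsBSHM H R a b)
    (haAtt : ∃ j k, j ≠ k ∧ colDot H R j k = a)
    (hbAtt : ∃ j k, j ≠ k ∧ colDot H R j k = b)
    (hmod : ¬ Int.ModEq 4 a b) :
    b ≠ -a ∧
    Xor' (Int.ModEq 4 (ℓ : ℤ) a) (Int.ModEq 4 (ℓ : ℤ) b) ∧
    (Int.ModEq 4 (ℓ : ℤ) a → ∀ i : Fin n, (kA H R a i : ℚ) = (n : ℚ) / 2 - 1) := by
  obtain ⟨hH, hdot⟩ := hbshm
  subst hRcard
  have hparity : ∀ c, (∃ j k, j ≠ k ∧ colDot H R j k = c) → c ≡ R.card [ZMOD 2] :=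
    fun c ⟨j, k, _, hc⟩ => hc ▸ colDot_modEq_two hH.1 R j k
  have hxor := Int.xor_modEq_four_of_modEq_two (hparity a haAtt) (hparity b hbAtt) hmod
  have hab : a ≠ b := fun h => hmod (h ▸ Int.ModEq.refl a)
  have hba : b ≠ -a := by
    rintro rfl
    have ha : Odd a := by
      simp only [Int.ModEq] at hmod
      rw [Int.odd_iff]
      omega
    exact not_forall_colDot_eq_or_eq_neg hH ha hxor.or h1 h2 hdot
  refine ⟨hba, hxor, fun hℓ i => ?_⟩
  obtain ⟨j, k, hjk, hb⟩ := hbAtt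
  have hsum := kA_add_kA_of_colDot_eq hH.1 hmod hdot hℓ hjk hb
  have hj := kA_add_kA hab hdot j
  have hk := kA_add_kA hab hdot k
  rw [kA_eq_kA hH hab hba hdot j i] at hj
  rw [kA_eq_kA hH hab hba hdot k i] at hk
  have h2k : (kA H R a i : ℤ) * 2 = n - 2 := by omega
  have : (kA H R a i : ℚ) * 2 = n - 2 := by exact_mod_cast h2k
  linarith
end

section
/- (i) Suppose H is a nontrivial BSHM(n,2,a,b) with respect to a 2×n submatrix H₁, with the values a and b both attained. Then {a,b} = {2,0}, or n = 4 and {a,b} = {−2,0}. (ii) For every Hadamard matrix H of order n ≥ 4 there is a matrix H′ obtained from H by negating some of its columns such that H′ is a Hadamard matrix that is a BSHM(n,2,2,0) with respect to the submatrix formed by its first two rows. -/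
open Matrix

/-! Multiplying the columns of `H` by the entries of row `r` turns row `r` into all ones, after
which the two-row column dot products are `1 + (±1) ∈ {2, 0}`. Conversely, on rows `r, s` the dot
product of columns `j, k` vanishes exactly when the row products `H r j * H s j` and
`H r k * H s k` differ. Orthogonality of the two rows forces both row products to occur, so `0`
is attained; by pigeonhole two columns share a row product, so `±2` is attained too. The value
`-2` rules out two columns agreeing on both rows, which leaves room for at most four columns. -/

theorem Matrix.mul_transpose_eq_smul_one_of_transpose_mul {R m : Type*} [CommRing R] [IsDomain R]
    [Fintype m] [DecidableEq m] {A : Matrix m m R} {c : R} (hc : c ≠ 0)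
    (h : Aᵀ * A = c • 1) : A * Aᵀ = c • 1 := by
  have hdet : A.det ≠ 0 := by
    intro h0
    have := congrArg det h
    rw [det_mul, h0, mul_zero, det_smul, det_one, mul_one] at this
    exact pow_ne_zero _ hc this.symm
  have hker : (A * Aᵀ - c • 1) * A = 0 := by
    rw [sub_mul, Matrix.mul_assoc, h, Matrix.mul_smul, Matrix.smul_mul, Matrix.mul_one,
      Matrix.one_mul, sub_self]
  -- Cancel `A` on the right through its adjugate.
  have : A.det • (A * Aᵀ - c • 1) = 0 := by
    rw [← Matrix.mul_one (A * Aᵀ - c • 1), ← Matrix.mul_smul, ← mul_adjugate,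
      ← Matrix.mul_assoc, hker, Matrix.zero_mul]
  exact sub_eq_zero.mp ((smul_eq_zero.mp this).resolve_left hdet)

namespace IsHadamard

variable {n : ℕ} {H : Matrix (Fin n) (Fin n) ℤ}

theorem mul_transpose_s11 (hH : _root_.IsHadamard H) : H * Hᵀ = (n : ℤ) • 1 := by
  rcases Nat.eq_zero_or_pos n with rfl | hn
  · exact Subsingleton.elim _ _
  · exact mul_transpose_eq_smul_one_of_transpose_mul (by exact_mod_cast hn.ne') hH.2

theorem sum_mul_eq_zero (hH : _root_.IsHadamard H) {r s : Fin n} (hrs : r ≠ s) :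
    ∑ j, H r j * H s j = 0 := by
  simpa [Matrix.mul_apply, hrs] using congrFun (congrFun hH.mul_transpose_s11 r) s

theorem mul_diagonal (hH : _root_.IsHadamard H) {ε : Fin n → ℤ} (hε : ∀ j, ε j = 1 ∨ ε j = -1) :
    _root_.IsHadamard (H * diagonal ε) := by
  have hεε : (fun j => ε j * ε j) = fun _ => 1 :=
    funext fun j => by rcases hε j with h | h <;> simp [h]
  refine ⟨fun i j => ?_, ?_⟩
  · rw [Matrix.mul_diagonal]
    rcases hH.1 i j with h | h <;> rcases hε j with h' | h' <;> simp [h, h']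
  · rw [transpose_mul, diagonal_transpose, Matrix.mul_assoc, ← Matrix.mul_assoc Hᵀ, hH.2,
      Matrix.smul_mul, Matrix.one_mul, Matrix.mul_smul, diagonal_mul_diagonal, hεε,
      diagonal_one]

end IsHadamard

section TwoRows

variable {n : ℕ} {H : Matrix (Fin n) (Fin n) ℤ} {r s : Fin n}

theorem colDot_pair (hrs : r ≠ s) (j k : Fin n) :
    colDot H {r, s} j k = H r j * H r k + H s j * H s k :=
  Finset.sum_pair hrs

variable (hE : ∀ i j, H i j = 1 ∨ H i j = -1) (hrs : r ≠ s)
include hE hrs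

theorem colDot_pair_eq_zero_of_mul_ne {j k : Fin n} (h : H r j * H s j ≠ H r k * H s k) :
    colDot H {r, s} j k = 0 := by
  rw [colDot_pair hrs]
  rcases hE r j with h1 | h1 <;> rcases hE r k with h2 | h2 <;>
    rcases hE s j with h3 | h3 <;> rcases hE s k with h4 | h4 <;> simp_all

theorem colDot_pair_eq_two_or_neg_two_of_mul_eq {j k : Fin n}
    (h : H r j * H s j = H r k * H s k) :
    colDot H {r, s} j k = 2 ∨ colDot H {r, s} j k = -2 := by
  rw [colDot_pair hrs]
  rcases hE r j with h1 | h1 <;> rcases hE r k with h2 | h2 <;>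
    rcases hE s j with h3 | h3 <;> rcases hE s k with h4 | h4 <;> simp_all

theorem colDot_pair_eq_two_iff {j k : Fin n} :
    colDot H {r, s} j k = 2 ↔ H r j = H r k ∧ H s j = H s k := by
  rw [colDot_pair hrs]
  rcases hE r j with h1 | h1 <;> rcases hE r k with h2 | h2 <;>
    rcases hE s j with h3 | h3 <;> rcases hE s k with h4 | h4 <;> simp [h1, h2, h3, h4]

theorem exists_colDot_pair_eq_two_or_neg_two (hn : 2 < n) :
    ∃ j k, j ≠ k ∧ (colDot H {r, s} j k = 2 ∨ colDot H {r, s} j k = -2) := by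
  obtain ⟨j, -, k, -, hjk, hrow⟩ :=
    Finset.exists_ne_map_eq_of_card_lt_of_maps_to (s := Finset.univ) (t := {1, -1})
      (f := fun j => H r j * H s j) (by simpa using hn) fun j _ => by
        rcases hE r j with h | h <;> rcases hE s j with h' | h' <;> simp [h, h']
  exact ⟨j, k, hjk, colDot_pair_eq_two_or_neg_two_of_mul_eq hE hrs hrow⟩

theorem card_le_four_of_colDot_pair_ne_two
    (h : ∀ j k, j ≠ k → colDot H {r, s} j k ≠ 2) : n ≤ 4 := by
  have hinj : Set.InjOn (fun j => (H r j, H s j)) (Finset.univ : Finset (Fin n)) :=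
    fun j _ k _ hjk => by_contra fun hne =>
      h j k hne ((colDot_pair_eq_two_iff hE hrs).mpr (Prod.mk.inj hjk))
  have hmaps : ∀ j ∈ (Finset.univ : Finset (Fin n)), (H r j, H s j) ∈
      ({1, -1} : Finset ℤ) ×ˢ ({1, -1} : Finset ℤ) := fun j _ => by
    rcases hE r j with h | h <;> rcases hE s j with h' | h' <;> simp [h, h']
  simpa using Finset.card_le_card_of_injOn _ hmaps hinj

end TwoRows

namespace IsHadamard

variable {n : ℕ} {H : Matrix (Fin n) (Fin n) ℤ}

theorem exists_colDot_pair_eq_zero (hH : _root_.IsHadamard H) {r s : Fin n} (hrs : r ≠ s) :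
    ∃ j k, j ≠ k ∧ colDot H {r, s} j k = 0 := by
  obtain ⟨k, hk⟩ : ∃ k, H r r * H s r ≠ H r k * H s k := by
    by_contra! hall
    have hsum := hH.sum_mul_eq_zero hrs
    rw [Finset.sum_congr rfl fun k _ => (hall k).symm, Finset.sum_const, Finset.card_univ,
      Fintype.card_fin, nsmul_eq_mul] at hsum
    rcases hH.1 r r with h | h <;> rcases hH.1 s r with h' | h' <;> simp [h, h'] at hsum <;>
      omega
  exact ⟨r, k, fun h => hk (h ▸ rfl), colDot_pair_eq_zero_of_mul_ne hH.1 hrs hk⟩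

theorem isBSHM_mul_diagonal_row (hH : _root_.IsHadamard H) {r s : Fin n} (hrs : r ≠ s) :
    IsBSHM (H * diagonal (H r)) {r, s} 2 0 := by
  refine ⟨hH.mul_diagonal (hH.1 r), fun j k _ => ?_⟩
  simp only [colDot_pair hrs, Matrix.mul_diagonal]
  rcases hH.1 r j with h1 | h1 <;> rcases hH.1 r k with h2 | h2 <;>
    rcases hH.1 s j with h3 | h3 <;> rcases hH.1 s k with h4 | h4 <;> simp [h1, h2, h3, h4]

end IsHadamard

namespace IsBSHM

variable {n : ℕ} {H : Matrix (Fin n) (Fin n) ℤ}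

theorem symm {R : Finset (Fin n)} {a b : ℤ} (hB : IsBSHM H R a b) : IsBSHM H R b a :=
  ⟨hB.1, fun j k hjk => (hB.2 j k hjk).symm⟩

theorem eq_two_or_of_zero {r s : Fin n} (hrs : r ≠ s) {c : ℤ} (hB : IsBSHM H {r, s} 0 c)
    (hn : 4 ≤ n) : c = 2 ∨ (n = 4 ∧ c = -2) := by
  obtain ⟨j, k, hjk, hdot⟩ := exists_colDot_pair_eq_two_or_neg_two hB.1.1 hrs (by omega)
  have hc : colDot H {r, s} j k = c := (hB.2 j k hjk).resolve_left (by omega)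
  rcases hdot with h2 | h2
  · exact .inl (hc.symm.trans h2)
  · have hc2 : c = -2 := hc.symm.trans h2
    refine .inr ⟨le_antisymm (card_le_four_of_colDot_pair_ne_two hB.1.1 hrs fun j k hjk => ?_) hn,
      hc2⟩
    rcases hB.2 j k hjk with h | h <;> omega

end IsBSHM

theorem stmt11 {n : ℕ} :
    (∀ (a b : ℤ) (H : Matrix (Fin n) (Fin n) ℤ) (R : Finset (Fin n)),
      R.card = 2 → 2 < n - 1 → IsBSHM H R a b →
      (∃ j k, j ≠ k ∧ colDot H R j k = a) →
      (∃ j k, j ≠ k ∧ colDot H R j k = b) →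
      ({a, b} : Set ℤ) = {2, 0} ∨ (n = 4 ∧ ({a, b} : Set ℤ) = {-2, 0})) ∧
    (∀ (H : Matrix (Fin n) (Fin n) ℤ) (hn : 4 ≤ n), _root_.IsHadamard H →
      ∃ ε : Fin n → ℤ, (∀ j, ε j = 1 ∨ ε j = -1) ∧
        IsBSHM (Matrix.of fun i j => ε j * H i j)
          ({⟨0, by omega⟩, ⟨1, by omega⟩} : Finset (Fin n)) 2 0) := by
  refine ⟨fun a b H R hR hn hB _ _ => ?_, fun H hn hH => ?_⟩
  · obtain ⟨r, s, hrs, rfl⟩ := Finset.card_eq_two.mp hR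
    obtain ⟨j, k, hjk, h0⟩ := hB.1.exists_colDot_pair_eq_zero hrs
    rcases h0 ▸ hB.2 j k hjk with rfl | rfl
    · rcases hB.eq_two_or_of_zero hrs (by omega) with rfl | ⟨rfl, rfl⟩
      · exact .inl (Set.pair_comm 0 2)
      · exact .inr ⟨rfl, Set.pair_comm 0 (-2)⟩
    · rcases hB.symm.eq_two_or_of_zero hrs (by omega) with rfl | ⟨rfl, rfl⟩
      · exact .inl rfl
      · exact .inr ⟨rfl, rfl⟩
  · refine ⟨H ⟨0, by omega⟩, hH.1 _, ?_⟩
    convert hH.isBSHM_mul_diagonal_row (r := ⟨0, by omega⟩) (s := ⟨1, by omega⟩) (by simp)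
      using 1
    ext i j
    simp [mul_comm]
end
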